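/- A graph G is a cograph if and only if G is distance hereditary and contains no induced P_4; moreover every cograph is distance hereditary. -/

import Mathlib

open SimpleGraph

/-- A graph is distance hereditary if every connected induced subgraph preserves the
distances of the original graph. -/
def IsDistHereditary {V : Type} (G : SimpleGraph V) : Prop :=
  ∀ s : Set V, (SimpleGraph.induce s G).Connected →
    ∀ x y : s, (SimpleGraph.induce s G).dist x y = G.dist ↑x ↑y

/-- `G` has an induced path on four vertices. -/
def HasInducedP4 {V : Type} (G : SimpleGraph V) : Prop :=
  ∃ a b c d : V, a ≠ b ∧ a ≠ c ∧ a ≠ d ∧ b ≠ c ∧ b ≠ d ∧ c ≠ d ∧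
    G.Adj a b ∧ G.Adj b c ∧ G.Adj c d ∧ ¬ G.Adj a c ∧ ¬ G.Adj a d ∧ ¬ G.Adj b d

/-- A cograph is a `P₄`-free graph. -/
def IsCograph {V : Type} (G : SimpleGraph V) : Prop := ¬ HasInducedP4 G

/-!
In a `P₄`-free graph a shortest walk has length at most two: its first four vertices would
otherwise span an induced `P₄`, since any extra edge among them would shorten the walk. So in a
connected `P₄`-free graph two distinct non-adjacent vertices are at distance exactly two. Induced
subgraphs of cographs are cographs, hence every distance in a connected induced subgraph is
`0`, `1` or `2` exactly when it is in the whole graph.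
-/

section

variable {V W : Type} {G : SimpleGraph V}

theorem hasInducedP4_of_dist_eq_three {a b c d : V} (hab : G.Adj a b) (hbc : G.Adj b c)
    (hcd : G.Adj c d) (had : G.dist a d = 3) : HasInducedP4 G := by
  have short {u v : V} (p : G.Walk u v) (hp : p.length < 3) (hu : u = a) (hv : v = d) :
      False := by
    subst hu hv; have := G.dist_le p; omega
  refine ⟨a, b, c, d, hab.ne, ?_, ?_, hbc.ne, ?_, hcd.ne, hab, hbc, hcd, ?_, ?_, ?_⟩
  · exact fun h => short (.cons hcd .nil) (by simp) h.symm rfl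
  · exact fun h => short .nil (by simp) h.symm rfl
  · exact fun h => short (.cons hab .nil) (by simp) rfl h
  · exact fun h => short (.cons h (.cons hcd .nil)) (by simp) rfl rfl
  · exact fun h => short (.cons h .nil) (by simp) rfl rfl
  · exact fun h => short (.cons hab (.cons h .nil)) (by simp) rfl rfl

theorem IsCograph.dist_le_two (hG : IsCograph G) {x y : V}
    (hxy : G.Reachable x y) : G.dist x y ≤ 2 := by
  obtain ⟨p, hp⟩ := hxy.exists_walk_length_eq_dist
  rw [← hp]
  match p, hp with
  | .cons hab (.cons hbc (.cons hcd q)), hp =>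
    have hsub : (Walk.cons hab (.cons hbc (.cons hcd .nil))).IsSubwalk _ := ⟨.nil, q, rfl⟩
    exact (hG (hasInducedP4_of_dist_eq_three hab hbc hcd
      (length_eq_dist_of_subwalk hp hsub).symm)).elim
  | .nil, _ | .cons _ .nil, _ | .cons _ (.cons _ .nil), _ => simp

theorem IsCograph.dist_eq_two (hG : IsCograph G) {x y : V} (hxy : G.Reachable x y)
    (hne : x ≠ y) (hadj : ¬ G.Adj x y) : G.dist x y = 2 :=
  le_antisymm (hG.dist_le_two hxy) (hxy.one_lt_dist_of_ne_of_not_adj hne hadj)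

theorem HasInducedP4.map {H : SimpleGraph W} (f : H ↪g G) (hH : HasInducedP4 H) :
    HasInducedP4 G := by
  obtain ⟨a, b, c, d, hab, hac, had, hbc, hbd, hcd, eab, ebc, ecd, nac, nad, nbd⟩ := hH
  refine ⟨f a, f b, f c, f d, ?_⟩
  simp only [f.injective.ne_iff, f.map_adj_iff]
  exact ⟨hab, hac, had, hbc, hbd, hcd, eab, ebc, ecd, nac, nad, nbd⟩

theorem IsCograph.induce (hG : IsCograph G) (s : Set V) : IsCograph (G.induce s) :=
  mt (HasInducedP4.map (Embedding.induce s)) hG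

theorem IsCograph.isDistHereditary (hG : IsCograph G) : IsDistHereditary G := by
  intro s hs x y
  rcases eq_or_ne x y with rfl | hne
  · simp
  by_cases hadj : (G.induce s).Adj x y
  · rw [dist_eq_one_iff_adj.mpr hadj, dist_eq_one_iff_adj.mpr (show G.Adj x y from hadj)]
  · have hxy : G.Reachable x y := (hs x y).map (Embedding.induce s).toHom
    rw [(hG.induce s).dist_eq_two (hs x y) hne hadj,
      hG.dist_eq_two hxy (Subtype.coe_ne_coe.mpr hne) hadj]

end

theorem stmt18_general (V : Type) (G : SimpleGraph V) :
    (IsCograph G → IsDistHereditary G) ∧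
    (IsCograph G ↔ (IsDistHereditary G ∧ ¬ HasInducedP4 G)) :=
  ⟨IsCograph.isDistHereditary, fun hG => ⟨hG.isDistHereditary, hG⟩, And.right⟩

/-- every cograph is distance hereditary; consequently, a graph is a
cograph iff it is distance hereditary and has no induced `P₄`. -/
theorem stmt18 (V : Type) [Fintype V] (G : SimpleGraph V) :
    (IsCograph G → IsDistHereditary G) ∧
    (IsCograph G ↔ (IsDistHereditary G ∧ ¬ HasInducedP4 G)) :=
  stmt18_general V G
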